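/- For every real ρ ≥ 1: every set K of k vertices with d_{w'}(K,u) ≤ ρ·r' for all vertices u also satisfies d_w(K,u) ≤ ρ·r for all u; and every set K of k vertices with d_w(K,u) ≤ ρ·r for all vertices u also satisfies d_{w'}(K,u) ≤ (1+ε)·ρ·r' for all u. -/
import Mathlib


/-- The total weight of a walk in an edge-weighted graph. -/
def wWeight {V : Type*} (G : SimpleGraph V) (w : V → V → ℕ) {a b : V} (p : G.Walk a b) : ℕ :=
  (p.darts.map fun d => w d.toProd.1 d.toProd.2).sum

lemma wWeight_cons {V : Type*} (G : SimpleGraph V) (w : V → V → ℕ) {a b c : V}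
    (ha : G.Adj a b) (p : G.Walk b c) :
    wWeight G w (SimpleGraph.Walk.cons ha p) = w a b + wWeight G w p := by
  simp [wWeight]

lemma wWeight_append {V : Type*} (G : SimpleGraph V) (w : V → V → ℕ) {a b c : V}
    (p : G.Walk a b) (q : G.Walk b c) :
    wWeight G w (p.append q) = wWeight G w p + wWeight G w q := by
  simp [wWeight, SimpleGraph.Walk.darts_append]

lemma wWeight_dropUntil_le {V : Type*} [DecidableEq V] (G : SimpleGraph V) (w : V → V → ℕ)
    {a b : V} (p : G.Walk a b) (u : V) (h : u ∈ p.support) :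
    wWeight G w (p.dropUntil u h) ≤ wWeight G w p := by
  conv_rhs => rw [← p.take_spec h]
  rw [wWeight_append]
  omega

lemma wWeight_bypass_le {V : Type*} [DecidableEq V] (G : SimpleGraph V) (w : V → V → ℕ)
    {a b : V} (p : G.Walk a b) :
    wWeight G w p.bypass ≤ wWeight G w p := by
  induction p with
  | nil => simp [SimpleGraph.Walk.bypass]
  | cons ha p ih =>
    simp only [SimpleGraph.Walk.bypass]
    split_ifs with hs
    · refine (wWeight_dropUntil_le G w _ _ hs).trans (ih.trans ?_)
      rw [wWeight_cons]; omega
    · rw [wWeight_cons, wWeight_cons]; omega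

lemma wWeight_scale {V : Type*} (G : SimpleGraph V) (w : V → V → ℕ) (B : ℕ)
    {a b : V} (p : G.Walk a b) :
    wWeight G (fun x y => B * w x y + 1) p = B * wWeight G w p + p.length := by
  induction p with
  | nil => simp [wWeight]
  | cons ha p ih =>
    rw [wWeight_cons, wWeight_cons, ih, SimpleGraph.Walk.length_cons]
    ring

/-- Rescaling weights to eliminate zero weights: with `B = ⌈N/ε⌉`, `w' = B·w + 1` and
`r' = B·r`, for every `ρ ≥ 1`: any set `K` of `k` vertices with `d_{w'}(K,u) ≤ ρ·r'` for all `u`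
also satisfies `d_w(K,u) ≤ ρ·r` for all `u`; and any set `K` of `k` vertices with
`d_w(K,u) ≤ ρ·r` for all `u` satisfies `d_{w'}(K,u) ≤ (1+ε)·ρ·r'` for all `u`. -/
theorem stmt14 {V : Type*} [Fintype V] (G : SimpleGraph V) (w : V → V → ℕ)
    (hsymm : ∀ x y : V, w x y = w y x)
    (k r : ℕ) (hk : 1 ≤ k) (hr : 1 ≤ r) (ε : ℝ) (hε : 0 < ε)
    (B : ℕ) (hB : B = ⌈(Fintype.card V : ℝ) / ε⌉₊)
    (K : Finset V) (hK : K.card = k)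
    (hjoined : ∀ u : V, ∃ v ∈ K, G.Reachable v u)
    (ρ : ℝ) (hρ : 1 ≤ ρ) :
    ((∀ u : V, ∃ v ∈ K, ∃ p : G.Walk v u,
        (wWeight G (fun x y => B * w x y + 1) p : ℝ) ≤ ρ * ((B * r : ℕ) : ℝ)) →
      ∀ u : V, ∃ v ∈ K, ∃ p : G.Walk v u, (wWeight G w p : ℝ) ≤ ρ * (r : ℝ)) ∧
    ((∀ u : V, ∃ v ∈ K, ∃ p : G.Walk v u, (wWeight G w p : ℝ) ≤ ρ * (r : ℝ)) →
      ∀ u : V, ∃ v ∈ K, ∃ p : G.Walk v u,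
        (wWeight G (fun x y => B * w x y + 1) p : ℝ) ≤ (1 + ε) * ρ * ((B * r : ℕ) : ℝ)) := by
  classical
  have hr1 : (1 : ℝ) ≤ (r : ℝ) := by exact_mod_cast hr
  have hρr : (1 : ℝ) ≤ ρ * r := by nlinarith
  constructor
  · intro h u
    obtain ⟨v, hv, p, hp⟩ := h u
    refine ⟨v, hv, p, ?_⟩
    have hBpos : 0 < B := by
      rw [hB, Nat.ceil_pos]
      have : (0 : ℝ) < (Fintype.card V : ℝ) := by
        exact_mod_cast Fintype.card_pos_iff.mpr ⟨u⟩
      positivity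
    have hBR : (0 : ℝ) < (B : ℝ) := by exact_mod_cast hBpos
    rw [wWeight_scale] at hp
    push_cast at hp
    have h2 : (B : ℝ) * (wWeight G w p : ℝ) ≤ (B : ℝ) * (ρ * r) := by nlinarith
    exact le_of_mul_le_mul_left h2 hBR
  · intro h u
    obtain ⟨v, hv, p, hp⟩ := h u
    refine ⟨v, hv, p.bypass, ?_⟩
    rw [wWeight_scale]
    have hW : (wWeight G w p.bypass : ℝ) ≤ ρ * r :=
      le_trans (by exact_mod_cast wWeight_bypass_le G w p) hp
    have hL : (p.bypass.length : ℝ) ≤ (Fintype.card V : ℝ) :=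
      le_of_lt (by exact_mod_cast p.bypass_isPath.length_lt)
    have hNB : (Fintype.card V : ℝ) ≤ ε * B := by
      have h1 := Nat.le_ceil ((Fintype.card V : ℝ) / ε)
      rw [← hB, div_le_iff₀ hε] at h1
      linarith
    have hBnn : (0 : ℝ) ≤ (B : ℝ) := Nat.cast_nonneg _
    push_cast
    nlinarith [mul_le_mul_of_nonneg_left hW hBnn,
      mul_nonneg (mul_nonneg hε.le hBnn) (sub_nonneg.mpr hρr)]
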